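/- Let θ : Λ → ℚ[[x]] be the ring homomorphism with θ(p_1) = x and θ(p_n) = 0 for n > 1, and let f_r = ∑_{n ≥ 0} e_n e_{n+r} for r ∈ ℤ (with e_m = 0 for m < 0). Then θ(f_r) = ∑_{k ≥ 0} binom(|r| + 2k, k) x^{|r| + 2k} / (|r| + 2k)!, i.e. θ(f_r) is the modified Bessel function I_{|r|}(2x). -/

import Mathlib

/-!
We model the completed ring of symmetric functions `Λ̂` over `ℚ` as the ring of
formal power series in the power-sum generators: `MvPowerSeries ℕ ℚ`, where the
variable `X n` represents the power sum `p (n+1)`.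
-/

/-- The symmetric-function weight of a monomial in the power sums:
the variable `X i` (representing `p (i+1)`) has degree `i + 1`. -/
def psWeight (d : ℕ →₀ ℕ) : ℕ := d.sum fun i m => (i + 1) * m

/-- The elementary symmetric functions, defined via Newton's identities
`(n+1) e_{n+1} = ∑_{k=1}^{n+1} (-1)^{k-1} e_{n+1-k} p_k`, expressed in the
power-sum model of the ring of symmetric functions. -/
noncomputable def esym : ℕ → MvPowerSeries ℕ ℚ
  | 0 => 1
  | (n + 1) => (((n : ℚ) + 1)⁻¹) •
      ∑ j ∈ Finset.range (n + 1),
        ((-1 : MvPowerSeries ℕ ℚ)) ^ j * esym (n - j) * MvPowerSeries.X j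
  decreasing_by exact Nat.lt_succ_of_le (Nat.sub_le n j)

/-- `esymZ k = e_k`, extended by `0` to negative indices. -/
noncomputable def esymZ (k : ℤ) : MvPowerSeries ℕ ℚ :=
  if 0 ≤ k then esym k.toNat else 0

/-- `fSym r = ∑_{n ∈ ℤ} e_n e_{n+r}`, defined coefficientwise (for each monomial
only finitely many summands contribute, by homogeneity). -/
noncomputable def fSym (r : ℤ) : MvPowerSeries ℕ ℚ :=
  fun d => ∑ n ∈ Finset.range (psWeight d + 1),
    MvPowerSeries.coeff d (esymZ n * esymZ (n + r))

/-- The skewing operator `p₁^⊥`, the adjoint of multiplication by `p₁` with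
respect to the Hall inner product; equivalently the derivation `∂/∂p₁` in the
power-sum model, here defined coefficientwise. -/
noncomputable def pperp (F : MvPowerSeries ℕ ℚ) : MvPowerSeries ℕ ℚ :=
  fun d => ((d 0 : ℚ) + 1) * MvPowerSeries.coeff (d + Finsupp.single 0 1) F

/-- The ring homomorphism `θ : Λ̂ → ℚ[[x]]` determined by `θ(p₁) = x` and
`θ(pₙ) = 0` for `n > 1`, realized coefficientwise in the power-sum model:
the coefficient of `x^m` in `θ F` is the coefficient of `p₁^m` in `F`. -/
noncomputable def theta (F : MvPowerSeries ℕ ℚ) : PowerSeries ℚ :=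
  PowerSeries.mk fun m => MvPowerSeries.coeff (Finsupp.single 0 m) F

/-!
`θ` only sees the coefficients of pure powers of `p₁`, and on those it is multiplicative, so it
is a ring homomorphism. Newton's identities then give `θ(e_{n+1}) = θ(e_n) x / (n+1)`, that is
`θ(e_n) = x^n / n!`, and hence `θ(e_n e_{n+r}) = x^{2n+r} / (n! (n+r)!)`. The coefficient of
`x^m` in `θ(f_r)` therefore comes from the single `n` with `2n + r = m`, and equals
`binom(m, n) / m!`; by the symmetry of binomial coefficients this is
`binom(m, (m - |r|)/2) / m!` for either sign of `r`.
-/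

open MvPowerSeries

lemma theta_add (F G : MvPowerSeries ℕ ℚ) : theta (F + G) = theta F + theta G := by
  ext m
  simp [theta]

lemma theta_smul (q : ℚ) (F : MvPowerSeries ℕ ℚ) : theta (q • F) = q • theta F := by
  ext m
  simp [theta]

lemma theta_one : theta 1 = 1 := by
  ext m
  rcases eq_or_ne m 0 with rfl | hm
  · simp [theta]
  · simp [theta, MvPowerSeries.coeff_one, PowerSeries.coeff_one, hm]

lemma theta_mul (F G : MvPowerSeries ℕ ℚ) : theta (F * G) = theta F * theta G := by
  ext m
  simp [theta, MvPowerSeries.coeff_mul, PowerSeries.coeff_mul]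

noncomputable def thetaAlgHom : MvPowerSeries ℕ ℚ →ₐ[ℚ] PowerSeries ℚ :=
  AlgHom.ofLinearMap ⟨⟨theta, theta_add⟩, theta_smul⟩ theta_one theta_mul

lemma thetaAlgHom_apply (F : MvPowerSeries ℕ ℚ) : thetaAlgHom F = theta F := rfl

lemma theta_X (j : ℕ) : theta (X j) = if j = 0 then PowerSeries.X else 0 := by
  ext m
  rcases eq_or_ne j 0 with rfl | hj
  · simp [theta, MvPowerSeries.coeff_X, PowerSeries.coeff_X, Finsupp.single_eq_single_iff]
  · simp [theta, MvPowerSeries.coeff_X, Finsupp.single_eq_single_iff, hj, hj.symm]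

open Nat in
lemma theta_esym (n : ℕ) : theta (esym n) = (n ! : ℚ)⁻¹ • PowerSeries.X ^ n := by
  induction n with
  | zero => simp [esym, theta_one]
  | succ n ih =>
    rw [esym, ← thetaAlgHom_apply]
    simp only [map_smul, map_sum, map_mul, map_pow, map_neg, map_one, thetaAlgHom_apply, theta_X]
    rw [Finset.sum_eq_single 0 (by intro j _ hj; simp [hj]) (by simp)]
    simp only [pow_zero, one_mul, Nat.sub_zero, if_true, ih]
    simp [Nat.factorial_succ, smul_smul, pow_succ, mul_comm]

open Nat in
lemma coeff_theta_esym_mul (a b m : ℕ) :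
    PowerSeries.coeff m (theta (esym a * esym b)) =
      if a + b = m then (m.choose a : ℚ) / m ! else 0 := by
  rw [theta_mul, theta_esym, theta_esym, smul_mul_smul, ← pow_add,
    PowerSeries.coeff_smul, PowerSeries.coeff_X_pow, smul_eq_mul]
  rcases eq_or_ne (a + b) m with rfl | h
  · rw [if_pos rfl, if_pos rfl, Nat.cast_add_choose]
    field_simp
  · rw [if_neg h.symm, if_neg h, mul_zero]

lemma esymZ_natCast (n : ℕ) : esymZ n = esym n := by
  simp [esymZ]

lemma esymZ_of_neg {k : ℤ} (hk : k < 0) : esymZ k = 0 := by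
  simp [esymZ, hk]

lemma coeff_theta_esymZ_mul (r : ℤ) (n m : ℕ) :
    PowerSeries.coeff m (theta (esymZ n * esymZ (n + r))) =
      if (n : ℤ) + (n + r) = m ∧ 0 ≤ (n : ℤ) + r then (m.choose n : ℚ) / m.factorial else 0 := by
  rcases lt_or_ge ((n : ℤ) + r) 0 with hneg | hnonneg
  · rw [esymZ_of_neg hneg, mul_zero, ← thetaAlgHom_apply, map_zero, map_zero,
      if_neg fun h => (not_le.mpr hneg) h.2]
  · obtain ⟨j, hj⟩ := Int.eq_ofNat_of_zero_le hnonneg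
    rw [hj, esymZ_natCast, esymZ_natCast, coeff_theta_esym_mul]
    simp only [Int.natCast_nonneg, and_true]
    norm_cast

lemma coeff_theta_fSym (r : ℤ) (m : ℕ) :
    PowerSeries.coeff m (theta (fSym r)) =
      ∑ n ∈ Finset.range (m + 1), PowerSeries.coeff m (theta (esymZ n * esymZ (n + r))) := by
  have hw : psWeight (Finsupp.single 0 m) = m := by
    simp [psWeight, Finsupp.sum_single_index]
  simp only [theta, PowerSeries.coeff_mk]
  rw [MvPowerSeries.coeff_apply, fSym, hw]

lemma add_add_eq_and_add_nonneg_iff (r : ℤ) (m n : ℕ) :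
    ((n : ℤ) + (n + r) = m ∧ 0 ≤ (n : ℤ) + r) ↔
      (r.natAbs ≤ m ∧ (m - r.natAbs) % 2 = 0) ∧
        n = if 0 ≤ r then (m - r.natAbs) / 2 else m - (m - r.natAbs) / 2 := by
  split_ifs <;> omega

/-- `θ(f_r) = ∑_{k ≥ 0} binom(|r|+2k, k) x^{|r|+2k}/(|r|+2k)!`, i.e. `θ(f_r)` is
the modified Bessel function `I_{|r|}(2x)`: the coefficient of `x^m` is
`binom(m, (m-|r|)/2)/m!` when `m ≥ |r|` and `m - |r|` is even, and `0` otherwise. -/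
theorem theta_fSym (r : ℤ) :
    theta (fSym r) = PowerSeries.mk fun m =>
      if r.natAbs ≤ m ∧ (m - r.natAbs) % 2 = 0 then
        (m.choose ((m - r.natAbs) / 2) : ℚ) / m.factorial
      else 0 := by
  ext m
  rw [PowerSeries.coeff_mk, coeff_theta_fSym]
  simp only [coeff_theta_esymZ_mul, add_add_eq_and_add_nonneg_iff]
  by_cases hm : r.natAbs ≤ m ∧ (m - r.natAbs) % 2 = 0
  · simp only [hm, true_and, if_true]
    rw [Finset.sum_ite_eq', if_pos (Finset.mem_range.mpr (by split_ifs <;> omega))]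
    split_ifs
    · rfl
    · rw [Nat.choose_symm (by omega)]
  · simp [hm]
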